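/- Let Y ∈ ℝⁿ and X ∈ ℝ^{n×p} with p < n and X of full column rank. Let X̃ ∈ ℝ^{(n−p)×n} have orthonormal rows with null(X̃) = image(X), and set Ỹ = X̃Y. Then the optimal value of the Lasso problem min_{β∈ℝⁿ} ½‖Ỹ − X̃β‖² + λΣ_i|β_i| equals the optimal value of the Huber regression problem min_{θ∈ℝ^p} Σ_{i=1}^n ρ_H(Y_i − ⟨X_i,θ⟩; λ), and the solutions of the two problems are in one-to-one correspondence; in particular, the Huber M-estimator is recovered from the Lasso solution β̂ via θ̂ = (XᵀX)^{−1}Xᵀ(Y − β̂). -/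
import Mathlib

noncomputable def huberLoss (lam z : ℝ) : ℝ :=
  if |z| ≤ lam then z ^ 2 / 2 else lam * |z| - lam ^ 2 / 2

open Matrix

/-- Clamp of `z` to `[-lam, lam]`. -/
noncomputable def stClamp (lam z : ℝ) : ℝ := max (-lam) (min lam z)

/-- Soft-thresholding of `z` at level `lam`. -/
noncomputable def stSoft (lam z : ℝ) : ℝ := z - stClamp lam z

lemma stClamp_abs_le {lam : ℝ} (hlam : 0 ≤ lam) (z : ℝ) : |stClamp lam z| ≤ lam := by
  rw [abs_le]
  constructor
  · exact le_max_left _ _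
  · exact max_le (by linarith) (min_le_left _ _)

lemma huber_eq (lam : ℝ) (hlam : 0 < lam) (z : ℝ) :
    huberLoss lam z = (stClamp lam z) ^ 2 / 2 + lam * |stSoft lam z| := by
  unfold huberLoss stSoft stClamp
  rcases le_or_gt z (-lam) with h1 | h1
  · have hz : ¬ |z| ≤ lam ∨ z = -lam := by
      rcases eq_or_lt_of_le h1 with he | he
      · right; exact he
      · left; rw [abs_le]; push_neg; intro hc; linarith
    have hmin : min lam z = z := min_eq_right (by linarith)
    have hmax : max (-lam) z = -lam := max_eq_left h1
    rw [hmin, hmax]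
    rcases hz with hz | hz
    · rw [if_neg hz]
      have habs : |z| = -z := abs_of_nonpos (by linarith)
      have habs2 : |z - -lam| = -(z + lam) := by
        rw [abs_of_nonpos (by linarith)]; ring
      rw [habs, habs2]; ring
    · subst hz
      rw [if_pos (by rw [abs_of_nonpos (by linarith)]; linarith)]
      simp [abs_of_nonpos, hlam.le]
  · rcases le_or_gt z lam with h2 | h2
    · have habs : |z| ≤ lam := abs_le.mpr ⟨by linarith, h2⟩
      rw [if_pos habs, min_eq_right h2, max_eq_right (by linarith)]
      simp
    · have habs : ¬ |z| ≤ lam := by rw [abs_le]; push_neg; intro hc; linarith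
      rw [if_neg habs, min_eq_left h2.le, max_eq_right (by linarith)]
      rw [abs_of_pos (by linarith : (0:ℝ) < z), abs_of_nonneg (by linarith : (0:ℝ) ≤ z - lam)]
      ring

lemma lam_mul_abs_soft (lam : ℝ) (hlam : 0 < lam) (z : ℝ) :
    lam * |stSoft lam z| = stSoft lam z * stClamp lam z := by
  unfold stSoft stClamp
  rcases le_or_gt z (-lam) with h1 | h1
  · rw [min_eq_right (by linarith), max_eq_left h1, abs_of_nonpos (by linarith)]
    ring
  · rcases le_or_gt z lam with h2 | h2
    · rw [min_eq_right h2, max_eq_right (by linarith)]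
      simp
    · rw [min_eq_left h2.le, max_eq_right (by linarith),
        abs_of_nonneg (by linarith : (0:ℝ) ≤ z - lam)]
      ring

lemma huber_key (lam : ℝ) (hlam : 0 < lam) (z x : ℝ) :
    huberLoss lam z + (x - stSoft lam z) ^ 2 / 2 ≤ (z - x) ^ 2 / 2 + lam * |x| := by
  rw [huber_eq lam hlam z, lam_mul_abs_soft lam hlam z]
  set s := stSoft lam z with hs
  set c := stClamp lam z with hcdef
  have hzs : z = s + c := by rw [hs, hcdef]; unfold stSoft; ring
  have hc : |c| ≤ lam := stClamp_abs_le hlam.le z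
  have hxc : c * x ≤ lam * |x| := by
    calc c * x ≤ |c * x| := le_abs_self _
    _ = |c| * |x| := abs_mul _ _
    _ ≤ lam * |x| := mul_le_mul_of_nonneg_right hc (abs_nonneg x)
  rw [hzs]
  nlinarith [hxc]

lemma huber_nonneg (lam : ℝ) (hlam : 0 < lam) (z : ℝ) : 0 ≤ huberLoss lam z := by
  unfold huberLoss
  split_ifs with h
  · positivity
  · push_neg at h
    nlinarith [abs_nonneg z]

lemma dot_mulVec_left {m k : Type*} [Fintype m] [Fintype k]
    (A : Matrix m k ℝ) (x : k → ℝ) (y : m → ℝ) :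
    (A *ᵥ x) ⬝ᵥ y = x ⬝ᵥ (Aᵀ *ᵥ y) := by
  rw [dotProduct_comm, dotProduct_mulVec, ← Matrix.mulVec_transpose, dotProduct_comm]

lemma sumsq_eq_dot {m : Type*} [Fintype m] (u : m → ℝ) : ∑ i, u i ^ 2 = u ⬝ᵥ u := by
  simp [dotProduct, sq]

lemma dot_self_nonneg' {m : Type*} [Fintype m] (u : m → ℝ) : 0 ≤ u ⬝ᵥ u := by
  rw [← sumsq_eq_dot]; exact Finset.sum_nonneg fun i _ => sq_nonneg _

lemma dot_self_eq_zero' {m : Type*} [Fintype m] {u : m → ℝ} (h : u ⬝ᵥ u = 0) : u = 0 := by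
  funext i
  have h0 : ∑ j, u j ^ 2 = 0 := by rw [sumsq_eq_dot]; exact h
  have := (Finset.sum_eq_zero_iff_of_nonneg (fun j _ => sq_nonneg (u j))).mp h0 i (Finset.mem_univ i)
  exact pow_eq_zero_iff (n := 2) (by norm_num) |>.mp this

/-- The least-squares map `v ↦ (XᵀX)⁻¹ Xᵀ v`. -/
noncomputable def thetaStar {n p : ℕ} (X : Matrix (Fin n) (Fin p) ℝ) (v : Fin n → ℝ) :
    Fin p → ℝ :=
  (X.transpose * X)⁻¹.mulVec (X.transpose.mulVec v)

/-- Lasso objective. -/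
noncomputable def lassoF {m n : ℕ} (lam : ℝ) (Xt : Matrix (Fin m) (Fin n) ℝ)
    (Y β : Fin n → ℝ) : ℝ :=
  (1 / 2) * (∑ i, (Xt.mulVec Y i - Xt.mulVec β i) ^ 2) + lam * ∑ i, |β i|

/-- Huber objective. -/
noncomputable def huberF {n p : ℕ} (lam : ℝ) (X : Matrix (Fin n) (Fin p) ℝ)
    (Y : Fin n → ℝ) (θ : Fin p → ℝ) : ℝ :=
  ∑ i, huberLoss lam (Y i - X.mulVec θ i)

/-- Joint objective. -/
noncomputable def jointF {n p : ℕ} (lam : ℝ) (X : Matrix (Fin n) (Fin p) ℝ)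
    (Y : Fin n → ℝ) (β : Fin n → ℝ) (θ : Fin p → ℝ) : ℝ :=
  (1 / 2) * (∑ i, (Y i - X.mulVec θ i - β i) ^ 2) + lam * ∑ i, |β i|

/-- Coordinatewise soft-thresholding of the residual. -/
noncomputable def softVec {n p : ℕ} (lam : ℝ) (X : Matrix (Fin n) (Fin p) ℝ)
    (Y : Fin n → ℝ) (θ : Fin p → ℝ) : Fin n → ℝ :=
  fun i => stSoft lam (Y i - X.mulVec θ i)

/-- the Lasso–Huber duality. With `X̃` having orthonormal rows,
`null(X̃) = image(X)` and `Ỹ = X̃Y`, the Lasso problem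
`min_β ½‖Ỹ - X̃β‖² + λΣ|βᵢ|` and the Huber regression problem
`min_θ Σᵢ ρ_H(Yᵢ - ⟨Xᵢ,θ⟩; λ)` have the same optimal value; their solution sets are in
one-to-one correspondence, the Huber solution being recovered from the Lasso solution
via `θ̂ = (XᵀX)⁻¹Xᵀ(Y - β̂)`. -/
theorem lasso_huber_duality
    (lam : ℝ) (hlam : 0 < lam)
    {n p : ℕ} (hpn : p < n)
    (X : Matrix (Fin n) (Fin p) ℝ)
    (hXrank : LinearIndependent ℝ fun j : Fin p => fun i : Fin n => X i j)
    (Xt : Matrix (Fin (n - p)) (Fin n) ℝ)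
    (hXtOrth : Xt * Xt.transpose = 1)
    (hXtNull : LinearMap.ker Xt.mulVecLin = LinearMap.range X.mulVecLin)
    (Y : Fin n → ℝ) :
    (⨅ β : Fin n → ℝ,
        ((1 / 2) * (∑ i, (Xt.mulVec Y i - Xt.mulVec β i) ^ 2) + lam * ∑ i, |β i|)) =
      (⨅ θ : Fin p → ℝ, ∑ i, huberLoss lam (Y i - X.mulVec θ i)) ∧
    ∃ e : {β : Fin n → ℝ // ∀ β' : Fin n → ℝ,
            (1 / 2) * (∑ i, (Xt.mulVec Y i - Xt.mulVec β i) ^ 2) + lam * ∑ i, |β i| ≤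
              (1 / 2) * (∑ i, (Xt.mulVec Y i - Xt.mulVec β' i) ^ 2) + lam * ∑ i, |β' i|} ≃
          {θ : Fin p → ℝ // ∀ θ' : Fin p → ℝ,
            ∑ i, huberLoss lam (Y i - X.mulVec θ i) ≤
              ∑ i, huberLoss lam (Y i - X.mulVec θ' i)},
      ∀ β, (e β : Fin p → ℝ) =
        (X.transpose * X)⁻¹.mulVec (X.transpose.mulVec (Y - (β : Fin n → ℝ))) := by
  classical
  show (⨅ β : Fin n → ℝ, lassoF lam Xt Y β) = (⨅ θ : Fin p → ℝ, huberF lam X Y θ) ∧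
    ∃ e : {β : Fin n → ℝ // ∀ β' : Fin n → ℝ, lassoF lam Xt Y β ≤ lassoF lam Xt Y β'} ≃
          {θ : Fin p → ℝ // ∀ θ' : Fin p → ℝ, huberF lam X Y θ ≤ huberF lam X Y θ'},
      ∀ β, (e β : Fin p → ℝ) = thetaStar X (Y - (β : Fin n → ℝ))
  -- basic facts
  have hXinj : Function.Injective X.mulVec := Matrix.mulVec_injective_iff.mpr hXrank
  have hunit : IsUnit (Xᵀ * X) := by
    apply Matrix.mulVec_injective_iff_isUnit.mp
    have h0 : ∀ v : Fin p → ℝ, (Xᵀ * X) *ᵥ v = 0 → v = 0 := by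
      intro v hv
      have h1 : (X *ᵥ v) ⬝ᵥ (X *ᵥ v) = 0 := by
        rw [dot_mulVec_left, Matrix.mulVec_mulVec, hv, dotProduct_zero]
      have h2 : X *ᵥ v = 0 := dot_self_eq_zero' h1
      have h3 : X *ᵥ v = X *ᵥ 0 := by rw [h2, Matrix.mulVec_zero]
      exact hXinj h3
    intro a b hab
    have : (Xᵀ * X) *ᵥ (a - b) = 0 := by
      rw [Matrix.mulVec_sub, hab, sub_self]
    have := h0 _ this
    exact sub_eq_zero.mp this
  have hinv1 : (Xᵀ * X) * (Xᵀ * X)⁻¹ = 1 :=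
    Matrix.mul_nonsing_inv _ ((Matrix.isUnit_iff_isUnit_det _).mp hunit)
  have hw0 : ∀ v : Fin n → ℝ, Xᵀ *ᵥ (v - X *ᵥ thetaStar X v) = 0 := by
    intro v
    rw [Matrix.mulVec_sub, thetaStar, Matrix.mulVec_mulVec, Matrix.mulVec_mulVec,
      hinv1, Matrix.one_mulVec, sub_self]
  have hker : ∀ θ : Fin p → ℝ, Xt *ᵥ (X *ᵥ θ) = 0 := by
    intro θ
    have hm : X *ᵥ θ ∈ LinearMap.range X.mulVecLin := ⟨θ, by simp [Matrix.mulVecLin_apply]⟩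
    rw [← hXtNull, LinearMap.mem_ker, Matrix.mulVecLin_apply] at hm
    exact hm
  have hproj : ∀ w : Fin n → ℝ, Xᵀ *ᵥ w = 0 → Xtᵀ *ᵥ (Xt *ᵥ w) = w := by
    intro w hw
    have h1 : Xt *ᵥ (w - Xtᵀ *ᵥ (Xt *ᵥ w)) = 0 := by
      have e0 : Xt *ᵥ (Xtᵀ *ᵥ (Xt *ᵥ w)) = (Xt * Xtᵀ) *ᵥ (Xt *ᵥ w) :=
        Matrix.mulVec_mulVec _ _ _
      rw [Matrix.mulVec_sub, e0, hXtOrth, Matrix.one_mulVec, sub_self]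
    have hm : w - Xtᵀ *ᵥ (Xt *ᵥ w) ∈ LinearMap.range X.mulVecLin := by
      rw [← hXtNull, LinearMap.mem_ker, Matrix.mulVecLin_apply]
      exact h1
    obtain ⟨θ, hθ⟩ := hm
    rw [Matrix.mulVecLin_apply] at hθ
    have hr : (w - Xtᵀ *ᵥ (Xt *ᵥ w)) ⬝ᵥ (w - Xtᵀ *ᵥ (Xt *ᵥ w)) = 0 := by
      nth_rewrite 2 [← hθ]
      rw [sub_dotProduct]
      have e1 : w ⬝ᵥ (X *ᵥ θ) = 0 := by
        rw [dotProduct_comm, dot_mulVec_left, hw, dotProduct_zero]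
      have e2 : (Xtᵀ *ᵥ (Xt *ᵥ w)) ⬝ᵥ (X *ᵥ θ) = 0 := by
        rw [dot_mulVec_left, Matrix.transpose_transpose, hker, dotProduct_zero]
      rw [e1, e2, sub_zero]
    have := dot_self_eq_zero' hr
    have := sub_eq_zero.mp this
    exact this.symm
  have key1 : ∀ (v : Fin n → ℝ) (θ : Fin p → ℝ),
      (Xt *ᵥ v) ⬝ᵥ (Xt *ᵥ v) + (X *ᵥ (thetaStar X v - θ)) ⬝ᵥ (X *ᵥ (thetaStar X v - θ)) =
        (v - X *ᵥ θ) ⬝ᵥ (v - X *ᵥ θ) := by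
    intro v θ
    set w := v - X *ᵥ thetaStar X v with hwdef
    have hw := hw0 v
    have hXtv : Xt *ᵥ v = Xt *ᵥ w := by
      rw [hwdef, Matrix.mulVec_sub, hker, sub_zero]
    have hwd : ∀ u : Fin p → ℝ, w ⬝ᵥ (X *ᵥ u) = 0 := by
      intro u
      rw [dotProduct_comm, dot_mulVec_left, hw, dotProduct_zero]
    have hnorm : (Xt *ᵥ w) ⬝ᵥ (Xt *ᵥ w) = w ⬝ᵥ w := by
      rw [dot_mulVec_left, hproj w hw, dotProduct_comm]
    have hdecomp : v - X *ᵥ θ = w + X *ᵥ (thetaStar X v - θ) := by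
      rw [hwdef, Matrix.mulVec_sub]
      abel
    rw [hXtv, hnorm, hdecomp]
    set d := X *ᵥ (thetaStar X v - θ) with hd
    have h1 : w ⬝ᵥ d = 0 := hwd _
    have h2 : d ⬝ᵥ w = 0 := by rw [dotProduct_comm]; exact hwd _
    rw [add_dotProduct, dotProduct_add, dotProduct_add, h1, h2]
    ring
  -- rewriting the quadratic parts
  have hquadL : ∀ β : Fin n → ℝ,
      ∑ i, (Xt.mulVec Y i - Xt.mulVec β i) ^ 2 = (Xt *ᵥ (Y - β)) ⬝ᵥ (Xt *ᵥ (Y - β)) := by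
    intro β
    rw [Matrix.mulVec_sub, ← sumsq_eq_dot]
    simp [Pi.sub_apply]
  have hquadJ : ∀ (β : Fin n → ℝ) (θ : Fin p → ℝ),
      ∑ i, (Y i - X.mulVec θ i - β i) ^ 2 = ((Y - β) - X *ᵥ θ) ⬝ᵥ ((Y - β) - X *ᵥ θ) := by
    intro β θ
    rw [← sumsq_eq_dot]
    apply Finset.sum_congr rfl
    intro i _
    simp [Pi.sub_apply]
    ring_nf
  -- Lasso vs joint objective
  have S2a : ∀ β : Fin n → ℝ, lassoF lam Xt Y β = jointF lam X Y β (thetaStar X (Y - β)) := by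
    intro β
    unfold lassoF jointF
    congr 1
    congr 1
    rw [hquadL, hquadJ]
    have := key1 (Y - β) (thetaStar X (Y - β))
    simp only [sub_self, Matrix.mulVec_zero, zero_dotProduct, add_zero] at this
    exact this
  have S2b : ∀ (β : Fin n → ℝ) (θ : Fin p → ℝ), lassoF lam Xt Y β ≤ jointF lam X Y β θ := by
    intro β θ
    unfold lassoF jointF
    have h1 := key1 (Y - β) θ
    have h2 := dot_self_nonneg' (X *ᵥ (thetaStar X (Y - β) - θ))
    rw [hquadL, hquadJ]
    linarith
  have S2c : ∀ (β : Fin n → ℝ) (θ : Fin p → ℝ),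
      jointF lam X Y β θ ≤ lassoF lam Xt Y β → θ = thetaStar X (Y - β) := by
    intro β θ hle
    unfold lassoF jointF at hle
    rw [hquadL, hquadJ] at hle
    have h1 := key1 (Y - β) θ
    have h2 := dot_self_nonneg' (X *ᵥ (thetaStar X (Y - β) - θ))
    have h3 : (X *ᵥ (thetaStar X (Y - β) - θ)) ⬝ᵥ (X *ᵥ (thetaStar X (Y - β) - θ)) = 0 := by
      linarith
    have h4 := dot_self_eq_zero' h3
    have h5 : X *ᵥ (thetaStar X (Y - β)) = X *ᵥ θ := by
      rw [Matrix.mulVec_sub] at h4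
      have := sub_eq_zero.mp h4
      exact this
    exact (hXinj h5).symm
  -- Huber vs joint objective
  have S1 : ∀ (θ : Fin p → ℝ) (β : Fin n → ℝ),
      huberF lam X Y θ + (1 / 2) * ∑ i, (β i - softVec lam X Y θ i) ^ 2 ≤
        jointF lam X Y β θ := by
    intro θ β
    unfold huberF jointF softVec
    have hsum : ∑ i, (huberLoss lam (Y i - X.mulVec θ i) +
        (β i - stSoft lam (Y i - X.mulVec θ i)) ^ 2 / 2) ≤
        ∑ i, ((Y i - X.mulVec θ i - β i) ^ 2 / 2 + lam * |β i|) :=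
      Finset.sum_le_sum fun i _ => huber_key lam hlam _ _
    rw [Finset.sum_add_distrib, Finset.sum_add_distrib] at hsum
    rw [← Finset.sum_div] at hsum
    rw [← Finset.mul_sum] at hsum
    rw [← Finset.sum_div] at hsum
    linarith
  have S1b : ∀ θ : Fin p → ℝ, jointF lam X Y (softVec lam X Y θ) θ = huberF lam X Y θ := by
    intro θ
    unfold huberF jointF softVec
    have hterm : ∀ i : Fin n, huberLoss lam (Y i - X.mulVec θ i) =
        (Y i - X.mulVec θ i - stSoft lam (Y i - X.mulVec θ i)) ^ 2 / 2 +
          lam * |stSoft lam (Y i - X.mulVec θ i)| := by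
      intro i
      rw [huber_eq lam hlam]
      congr 2
      unfold stSoft
      ring
    rw [Finset.sum_congr rfl fun i _ => hterm i]
    rw [Finset.sum_add_distrib, ← Finset.sum_div, ← Finset.mul_sum]
    ring
  -- the two comparison chains
  have A : ∀ β : Fin n → ℝ, huberF lam X Y (thetaStar X (Y - β)) ≤ lassoF lam Xt Y β := by
    intro β
    have h1 := S1 (thetaStar X (Y - β)) β
    have h2 := S2a β
    have h3 : (0:ℝ) ≤ (1 / 2) * ∑ i, (β i - softVec lam X Y (thetaStar X (Y - β)) i) ^ 2 := by
      have : (0:ℝ) ≤ ∑ i, (β i - softVec lam X Y (thetaStar X (Y - β)) i) ^ 2 :=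
        Finset.sum_nonneg fun i _ => sq_nonneg _
      linarith
    linarith
  have B : ∀ θ : Fin p → ℝ, lassoF lam Xt Y (softVec lam X Y θ) ≤ huberF lam X Y θ := by
    intro θ
    have := S2b (softVec lam X Y θ) θ
    rw [S1b θ] at this
    exact this
  -- nonnegativity and boundedness
  have hfnn : ∀ β : Fin n → ℝ, 0 ≤ lassoF lam Xt Y β := by
    intro β
    unfold lassoF
    have h1 : (0:ℝ) ≤ ∑ i, (Xt.mulVec Y i - Xt.mulVec β i) ^ 2 :=
      Finset.sum_nonneg fun i _ => sq_nonneg _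
    have h2 : (0:ℝ) ≤ ∑ i, |β i| := Finset.sum_nonneg fun i _ => abs_nonneg _
    have := mul_nonneg hlam.le h2
    linarith
  have hgnn : ∀ θ : Fin p → ℝ, 0 ≤ huberF lam X Y θ := by
    intro θ
    exact Finset.sum_nonneg fun i _ => huber_nonneg lam hlam _
  have hbddf : BddBelow (Set.range fun β : Fin n → ℝ => lassoF lam Xt Y β) := by
    refine ⟨0, ?_⟩
    rintro x ⟨β, rfl⟩
    exact hfnn β
  have hbddg : BddBelow (Set.range fun θ : Fin p → ℝ => huberF lam X Y θ) := by
    refine ⟨0, ?_⟩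
    rintro x ⟨θ, rfl⟩
    exact hgnn θ
  constructor
  · apply le_antisymm
    · refine le_ciInf fun θ => ?_
      exact (ciInf_le hbddf (softVec lam X Y θ)).trans (B θ)
    · refine le_ciInf fun β => ?_
      exact (ciInf_le hbddg (thetaStar X (Y - β))).trans (A β)
  · refine ⟨⟨fun b => ⟨thetaStar X (Y - b.1), ?_⟩, fun t => ⟨softVec lam X Y t.1, ?_⟩, ?_, ?_⟩,
      fun b => rfl⟩
    · intro θ'
      exact (A b.1).trans ((b.2 (softVec lam X Y θ')).trans (B θ'))
    · intro β'
      exact (B t.1).trans ((t.2 (thetaStar X (Y - β'))).trans (A β'))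
    · intro b
      apply Subtype.ext
      show softVec lam X Y (thetaStar X (Y - b.1)) = b.1
      set θh := thetaStar X (Y - b.1) with hθh
      have e1 := S1 θh b.1
      have e2 : jointF lam X Y b.1 θh = lassoF lam Xt Y b.1 := (S2a b.1).symm
      have e3 : lassoF lam Xt Y b.1 ≤ lassoF lam Xt Y (softVec lam X Y θh) := b.2 _
      have e4 : lassoF lam Xt Y (softVec lam X Y θh) ≤ huberF lam X Y θh := B θh
      have hsum : ∑ i, (b.1 i - softVec lam X Y θh i) ^ 2 ≤ 0 := by linarith
      have hz : ∀ i ∈ Finset.univ, (b.1 i - softVec lam X Y θh i) ^ 2 = 0 := by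
        have hle : ∑ i, (b.1 i - softVec lam X Y θh i) ^ 2 = 0 :=
          le_antisymm hsum (Finset.sum_nonneg fun i _ => sq_nonneg _)
        exact (Finset.sum_eq_zero_iff_of_nonneg fun i _ => sq_nonneg _).mp hle
      funext i
      have := hz i (Finset.mem_univ i)
      have := pow_eq_zero_iff (n := 2) (by norm_num) |>.mp this
      have := sub_eq_zero.mp this
      exact this.symm
    · intro t
      apply Subtype.ext
      show thetaStar X (Y - softVec lam X Y t.1) = t.1
      set βh := softVec lam X Y t.1 with hβh
      have e1 : lassoF lam Xt Y βh ≤ jointF lam X Y βh t.1 := S2b βh t.1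
      have e2 : jointF lam X Y βh t.1 = huberF lam X Y t.1 := S1b t.1
      have e3 : huberF lam X Y t.1 ≤ huberF lam X Y (thetaStar X (Y - βh)) := t.2 _
      have e4 : huberF lam X Y (thetaStar X (Y - βh)) ≤ lassoF lam Xt Y βh := A βh
      have hle : jointF lam X Y βh t.1 ≤ lassoF lam Xt Y βh := by linarith
      exact (S2c βh t.1 hle).symm
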